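/- Let X be a topological space and suppose the finest compatible quasi-uniformity 𝒰* on X consists of all neighborhoods of the diagonal Δ₁ in X_d × X. Then X satisfies: every neighborhood assignment (N_x) admits a quasi-pseudometric d with each d(x,·) upper semi-continuous and B_d(x,1) ⊆ N_x; conversely, this quasi-pseudometric condition implies every neighborhood of Δ₁ in X_d × X belongs to 𝒰*. -/

import Mathlib

/-- A quasi-uniformity on `X`: a filter of reflexive relations, each admitting a
composition-square refinement (no symmetry axiom). -/
structure QuasiUniformity (X : Type*) where
  uni : Set (Set (X × X))
  univ_mem : Set.univ ∈ uni
  inter_mem : ∀ U ∈ uni, ∀ V ∈ uni, U ∩ V ∈ uni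
  superset_mem : ∀ U ∈ uni, ∀ V : Set (X × X), U ⊆ V → V ∈ uni
  refl : ∀ U ∈ uni, ∀ x : X, (x, x) ∈ U
  comp : ∀ U ∈ uni, ∃ V ∈ uni, ∀ a b c : X, (a, b) ∈ V → (b, c) ∈ V → (a, c) ∈ U

/-- A quasi-uniformity is compatible with the topology of `X` if the sets
`U(x) = {y | (x,y) ∈ U}` form a neighborhood base at each `x`. -/
def QuasiUniformity.Compatible {X : Type*} [TopologicalSpace X] (q : QuasiUniformity X) : Prop :=
  ∀ x : X, ∀ s : Set X, s ∈ nhds x ↔ ∃ U ∈ q.uni, {y | (x, y) ∈ U} ⊆ s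

/-- Membership in the finest quasi-uniformity compatible with the topology of `X`. -/
def FineMember {X : Type*} [TopologicalSpace X] (U : Set (X × X)) : Prop :=
  ∃ q : QuasiUniformity X, q.Compatible ∧ U ∈ q.uni


/-- The quasi-pseudometric condition: every neighborhood assignment `N` admits a
quasi-pseudometric `d` with each `d x ·` upper semi-continuous and `B_d(x,1) ⊆ N x`. -/
def QPMCond (X : Type*) [TopologicalSpace X] : Prop :=
  ∀ N : X → Set X, (∀ x, N x ∈ nhds x) →
    ∃ d : X → X → ℝ, (∀ x y, 0 ≤ d x y) ∧ (∀ x, d x x = 0) ∧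
      (∀ x y z, d x z ≤ d x y + d y z) ∧
      (∀ x, UpperSemicontinuous (d x)) ∧
      (∀ x, {y | d x y < 1} ⊆ N x)

/-!
(4) ⇒ (6): a neighbourhood assignment `N` is a neighbourhood `W` of the diagonal in `X_d × X`,
so by (4) it lies in a compatible quasi-uniformity, which contains entourages `U₀ = W, U₁, …`
with `U (n+1) ○ U (n+1) ○ U (n+1) ⊆ U n`. The function `ρ x y = 2⁻¹ ^ (first n with (x, y) ∉ U n)`
satisfies `ρ x₁ x₄ ≤ 2 max (ρ x₁ x₂, ρ x₂ x₃, ρ x₃ x₄)`, and the infimum of `ρ`-lengths of chains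
is a quasi-pseudometric comparable to `ρ` up to a factor 2 (Frink's lemma, which never uses
symmetry). Compatibility makes `d y ·` small near `y`, whence upper semicontinuity of `d x ·`
by the triangle inequality, and `d x y < 1` forces `(x, y) ∈ U₀ = W`.

(6) ⇒ (4): with `d` as in (6) for the sections of `W`, the quasi-uniformity generated by the
`d`-entourages `{d < ε}` and the Pervin entourages `{(x, y) | x ∈ G → y ∈ G}` contains `W`; it is
compatible because the Pervin sections already form a neighbourhood base and, by upper
semicontinuity, the `d`-balls are neighbourhoods.
-/

open Filter Topology
open scoped SetRel

section

variable {X : Type*}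

structure IsQuasiPseudometric (d : X → X → ℝ) : Prop where
  nonneg : ∀ x y, 0 ≤ d x y
  self_eq_zero : ∀ x, d x x = 0
  triangle : ∀ x y z, d x z ≤ d x y + d y z

theorem upperSemicontinuous_of_triangle {d : X → X → ℝ} [TopologicalSpace X]
    (htri : ∀ x y z, d x z ≤ d x y + d y z)
    (hball : ∀ y ε, 0 < ε → ∀ᶠ z in 𝓝 y, d y z < ε) (x : X) :
    UpperSemicontinuous (d x) := by
  intro y c hc
  filter_upwards [hball y (c - d x y) (sub_pos.2 hc)] with z hz
  linarith [htri x y z]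

section ChainDist

variable (ρ : X → X → ℝ)

/-- The `ρ`-length of the path `x, l₀, l₁, …`, which ends at `l.getLastD x`. -/
def walkCost : X → List X → ℝ
  | _, [] => 0
  | x, y :: l => ρ x y + walkCost y l

noncomputable def chainDist (x y : X) : ℝ :=
  ⨅ l : List X, walkCost ρ x (l ++ [y])

variable {ρ}

@[simp] theorem walkCost_nil (x : X) : walkCost ρ x [] = 0 := rfl

@[simp] theorem walkCost_cons (x y : X) (l : List X) :
    walkCost ρ x (y :: l) = ρ x y + walkCost ρ y l := rfl

theorem walkCost_append (x : X) (l₁ l₂ : List X) :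
    walkCost ρ x (l₁ ++ l₂) = walkCost ρ x l₁ + walkCost ρ (l₁.getLastD x) l₂ := by
  induction l₁ generalizing x with
  | nil => simp
  | cons y l ih =>
    rw [List.cons_append, walkCost_cons, walkCost_cons, ih, List.getLastD_cons, add_assoc]

theorem walkCost_nonneg (hρ : ∀ x y, 0 ≤ ρ x y) (x : X) (l : List X) : 0 ≤ walkCost ρ x l := by
  induction l generalizing x with
  | nil => rfl
  | cons y l ih => exact add_nonneg (hρ x y) (ih y)

theorem exists_split_walkCost {α β : ℝ} (hα : 0 ≤ α) (hβ : 0 ≤ β) {x : X} {l : List X}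
    (hl : l ≠ []) (hcost : walkCost ρ x l ≤ α + β) :
    ∃ l₁ b l₂, l = l₁ ++ b :: l₂ ∧ walkCost ρ x l₁ ≤ α ∧ walkCost ρ b l₂ ≤ β := by
  induction l generalizing x α with
  | nil => exact absurd rfl hl
  | cons b l ih =>
    rw [walkCost_cons] at hcost
    by_cases hfirst : α < ρ x b
    · exact ⟨[], b, l, rfl, by simpa using hα, by linarith⟩
    rcases eq_or_ne l [] with rfl | hl'
    · exact ⟨[], b, [], rfl, by simpa using hα, by simpa using hβ⟩
    obtain ⟨l₁, c, l₂, rfl, h₁, h₂⟩ := ih (sub_nonneg.2 (not_lt.1 hfirst)) hl' (by linarith)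
    exact ⟨b :: l₁, c, l₂, rfl, by rw [walkCost_cons]; linarith, h₂⟩

theorem le_two_mul_walkCost (hρ : ∀ x y, 0 ≤ ρ x y) (hρ_self : ∀ x, ρ x x = 0)
    (hρ_max : ∀ x₁ x₂ x₃ x₄, ρ x₁ x₄ ≤ 2 * max (ρ x₁ x₂) (max (ρ x₂ x₃) (ρ x₃ x₄)))
    (x : X) (l : List X) : ρ x (l.getLastD x) ≤ 2 * walkCost ρ x l := by
  induction hn : l.length using Nat.strong_induction_on generalizing x l with
  | _ n ih =>
  rcases eq_or_ne l [] with rfl | hl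
  · simp [hρ_self]
  set L := walkCost ρ x l with hL_def
  have hL : 0 ≤ L := walkCost_nonneg hρ x l
  -- split at an edge `a → b` such that both sides cost at most half of the total
  obtain ⟨l₁, b, l₂, rfl, h₁, h₂⟩ :=
    exists_split_walkCost (by positivity) (by positivity) hl (add_halves L).ge
  set a := l₁.getLastD x
  have hsplit : L = walkCost ρ x l₁ + ρ a b + walkCost ρ b l₂ := by
    rw [hL_def, walkCost_append, walkCost_cons, add_assoc]
  have hlen : l₁.length + l₂.length < n := by simp [← hn]
  have hxa : ρ x a ≤ L := (ih _ (by omega) x l₁ rfl).trans (by linarith)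
  have hab : ρ a b ≤ L := by linarith [walkCost_nonneg hρ x l₁, walkCost_nonneg hρ b l₂]
  have hby : ρ b (l₂.getLastD b) ≤ L := (ih _ (by omega) b l₂ rfl).trans (by linarith)
  have hend : (l₁ ++ b :: l₂).getLastD x = l₂.getLastD b := by simp [List.getLast?_cons]
  rw [hend]
  exact (hρ_max x a b _).trans (by gcongr; exact max_le hxa (max_le hab hby))

theorem chainDist_le_walkCost (hρ : ∀ x y, 0 ≤ ρ x y) (x y : X) (l : List X) :
    chainDist ρ x y ≤ walkCost ρ x (l ++ [y]) :=
  ciInf_le ⟨0, Set.forall_mem_range.2 fun _ => walkCost_nonneg hρ x _⟩ l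

theorem chainDist_le (hρ : ∀ x y, 0 ≤ ρ x y) (x y : X) : chainDist ρ x y ≤ ρ x y := by
  simpa using chainDist_le_walkCost hρ x y []

theorem chainDist_nonneg (hρ : ∀ x y, 0 ≤ ρ x y) (x y : X) : 0 ≤ chainDist ρ x y :=
  le_ciInf fun _ => walkCost_nonneg hρ x _

theorem chainDist_triangle (hρ : ∀ x y, 0 ≤ ρ x y) (x y z : X) :
    chainDist ρ x z ≤ chainDist ρ x y + chainDist ρ y z :=
  le_ciInf_add_ciInf fun l₁ l₂ => by
    have h := chainDist_le_walkCost hρ x z (l₁ ++ y :: l₂)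
    rwa [show l₁ ++ y :: l₂ ++ [z] = (l₁ ++ [y]) ++ (l₂ ++ [z]) by simp, walkCost_append,
      List.getLastD_concat] at h

theorem le_two_mul_chainDist (hρ : ∀ x y, 0 ≤ ρ x y) (hρ_self : ∀ x, ρ x x = 0)
    (hρ_max : ∀ x₁ x₂ x₃ x₄, ρ x₁ x₄ ≤ 2 * max (ρ x₁ x₂) (max (ρ x₂ x₃) (ρ x₃ x₄)))
    (x y : X) : ρ x y ≤ 2 * chainDist ρ x y := by
  rw [← div_le_iff₀' two_pos]
  refine le_ciInf fun l => (div_le_iff₀' two_pos).2 ?_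
  simpa using le_two_mul_walkCost hρ hρ_self hρ_max x (l ++ [y])

end ChainDist

theorem exists_isQuasiPseudometric_between {ρ : X → X → ℝ} (hρ : ∀ x y, 0 ≤ ρ x y)
    (hρ_self : ∀ x, ρ x x = 0)
    (hρ_max : ∀ x₁ x₂ x₃ x₄, ρ x₁ x₄ ≤ 2 * max (ρ x₁ x₂) (max (ρ x₂ x₃) (ρ x₃ x₄))) :
    ∃ d, IsQuasiPseudometric d ∧ ∀ x y, ρ x y ≤ d x y ∧ d x y ≤ 2 * ρ x y := by
  refine ⟨fun x y => 2 * chainDist ρ x y, ⟨fun x y => ?_, fun x => ?_, fun x y z => ?_⟩,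
    fun x y => ⟨le_two_mul_chainDist hρ hρ_self hρ_max x y, ?_⟩⟩
  · exact mul_nonneg zero_le_two (chainDist_nonneg hρ x y)
  · linarith [chainDist_le hρ x x, chainDist_nonneg hρ x x, hρ_self x]
  · linarith [chainDist_triangle hρ x y z]
  · linarith [chainDist_le hρ x y]

section LevelDist

open scoped Classical

variable {U : ℕ → Set (X × X)} {x y : X}

noncomputable def levelDist (U : ℕ → Set (X × X)) (x y : X) : ℝ :=
  if h : ∃ n, (x, y) ∉ U n then 2⁻¹ ^ Nat.find h else 0

theorem levelDist_nonneg (U : ℕ → Set (X × X)) (x y : X) : 0 ≤ levelDist U x y := by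
  unfold levelDist; split_ifs <;> positivity

theorem levelDist_self (hU : ∀ n x, (x, x) ∈ U n) (x : X) : levelDist U x x = 0 :=
  dif_neg fun ⟨n, hn⟩ => hn (hU n x)

theorem pow_le_levelDist {n : ℕ} (h : (x, y) ∉ U n) : (2⁻¹ : ℝ) ^ n ≤ levelDist U x y := by
  rw [levelDist, dif_pos ⟨n, h⟩]
  exact pow_le_pow_of_le_one (by norm_num) (by norm_num) (Nat.find_le h)

theorem levelDist_le_pow_iff {k : ℕ} : levelDist U x y ≤ 2⁻¹ ^ k ↔ ∀ n < k, (x, y) ∈ U n := by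
  unfold levelDist
  split_ifs with h
  · rw [pow_le_pow_iff_right_of_lt_one₀ (by norm_num) (by norm_num), Nat.le_find_iff]
    simp only [not_not]
  · simp only [not_exists, not_not] at h
    simp only [h, implies_true, iff_true]
    positivity

theorem levelDist_le_two_mul_max (hU : ∀ n, U (n + 1) ○ U (n + 1) ○ U (n + 1) ⊆ U n)
    (x₁ x₂ x₃ x₄ : X) :
    levelDist U x₁ x₄ ≤
      2 * max (levelDist U x₁ x₂) (max (levelDist U x₂ x₃) (levelDist U x₃ x₄)) := by
  by_cases h : ∃ n, (x₁, x₄) ∉ U n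
  swap
  · rw [levelDist, dif_neg h]
    exact mul_nonneg zero_le_two ((levelDist_nonneg U x₁ x₂).trans (le_max_left _ _))
  set m := Nat.find h
  have hsep : ¬ ((x₁, x₂) ∈ U (m + 1) ∧ (x₂, x₃) ∈ U (m + 1) ∧ (x₃, x₄) ∈ U (m + 1)) :=
    fun ⟨h₁, h₂, h₃⟩ => Nat.find_spec h (hU m ⟨x₃, ⟨x₂, h₁, h₂⟩, h₃⟩)
  have hmax : (2⁻¹ : ℝ) ^ (m + 1) ≤
      max (levelDist U x₁ x₂) (max (levelDist U x₂ x₃) (levelDist U x₃ x₄)) := by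
    simp only [not_and_or] at hsep
    rcases hsep with h' | h' | h'
    · exact le_max_of_le_left (pow_le_levelDist h')
    · exact le_max_of_le_right (le_max_of_le_left (pow_le_levelDist h'))
    · exact le_max_of_le_right (le_max_of_le_right (pow_le_levelDist h'))
  rw [levelDist, dif_pos h]
  calc (2⁻¹ : ℝ) ^ m = 2 * 2⁻¹ ^ (m + 1) := by ring
    _ ≤ _ := by gcongr

end LevelDist

namespace QuasiUniformity

theorem exists_comp_comp_subset (q : QuasiUniformity X) {U : Set (X × X)} (hU : U ∈ q.uni) :
    ∃ V ∈ q.uni, V ○ V ○ V ⊆ U := by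
  obtain ⟨V₁, hV₁, hV₁U⟩ := q.comp U hU
  obtain ⟨V, hV, hVV₁⟩ := q.comp V₁ hV₁
  refine ⟨V, hV, ?_⟩
  rintro ⟨a, e⟩ ⟨c, ⟨b, hab, hbc⟩, hce⟩
  exact hV₁U a c e (hVV₁ a b c hab hbc) (hVV₁ c c e (q.refl V hV c) hce)

theorem exists_seq_comp_comp_subset (q : QuasiUniformity X) {W : Set (X × X)}
    (hW : W ∈ q.uni) : ∃ U : ℕ → Set (X × X), U 0 = W ∧ (∀ n, U n ∈ q.uni) ∧
      ∀ n, U (n + 1) ○ U (n + 1) ○ U (n + 1) ⊆ U n := by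
  choose! F hF hFU using fun U (hU : U ∈ q.uni) => q.exists_comp_comp_subset hU
  have hmem : ∀ n, F^[n] W ∈ q.uni := fun n => by
    induction n with
    | zero => exact hW
    | succ n ih => rw [Function.iterate_succ_apply']; exact hF _ ih
  refine ⟨fun n => F^[n] W, rfl, hmem, fun n => ?_⟩
  simp only [Function.iterate_succ_apply']
  exact hFU _ (hmem n)

theorem Compatible.eventually_levelDist_lt [TopologicalSpace X] {q : QuasiUniformity X}
    (hq : q.Compatible) {U : ℕ → Set (X × X)} (hU : ∀ n, U n ∈ q.uni) (x : X) {ε : ℝ}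
    (hε : 0 < ε) : ∀ᶠ y in 𝓝 x, levelDist U x y < ε := by
  obtain ⟨k, hk⟩ := exists_pow_lt_of_lt_one hε (by norm_num : (2⁻¹ : ℝ) < 1)
  have hsections : ∀ᶠ y in 𝓝 x, ∀ n ∈ Set.Iio k, (x, y) ∈ U n :=
    (eventually_all_finite (Set.finite_Iio k)).2 fun n _ => (hq x _).2 ⟨U n, hU n, subset_rfl⟩
  filter_upwards [hsections] with y hy
  exact (levelDist_le_pow_iff.2 hy).trans_lt hk

def ofFilter (F : Filter (X × X)) (hrefl : 𝓟 SetRel.id ≤ F)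
    (hcomp : F.lift' (fun V => V ○ V) ≤ F) : QuasiUniformity X where
  uni := F.sets
  univ_mem := Filter.univ_mem
  inter_mem _ hU _ hV := Filter.inter_mem hU hV
  superset_mem _ hU _ h := Filter.mem_of_superset hU h
  refl _ hU x := hrefl hU rfl
  comp U hU := by
    obtain ⟨V, hV, hVU⟩ := (mem_lift'_sets (monotone_id.relComp monotone_id)).1 (hcomp hU)
    exact ⟨V, hV, fun a b c hab hbc => hVU ⟨b, hab, hbc⟩⟩

theorem compatible_ofFilter [TopologicalSpace X] {F : Filter (X × X)} {hrefl : 𝓟 SetRel.id ≤ F}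
    {hcomp : F.lift' (fun V => V ○ V) ≤ F} (h : ∀ x, comap (Prod.mk x) F = 𝓝 x) :
    (ofFilter F hrefl hcomp).Compatible := fun x s => by
  rw [← h x, mem_comap]
  exact Iff.rfl

end QuasiUniformity

theorem lift'_comp_le_inf {F G : Filter (X × X)} (hF : F.lift' (fun V => V ○ V) ≤ F)
    (hG : G.lift' (fun V => V ○ V) ≤ G) : (F ⊓ G).lift' (fun V => V ○ V) ≤ F ⊓ G :=
  le_inf ((lift'_mono inf_le_left le_rfl).trans hF) ((lift'_mono inf_le_right le_rfl).trans hG)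

def ballFilter (d : X → X → ℝ) : Filter (X × X) :=
  ⨅ ε > 0, 𝓟 {p | d p.1 p.2 < ε}

theorem principal_id_le_ballFilter {d : X → X → ℝ} (hd : ∀ x, d x x = 0) :
    𝓟 SetRel.id ≤ ballFilter d :=
  le_iInf₂ fun _ hε => principal_mono.2 fun p (hp : p.1 = p.2) => by
    simpa [← hp, hd] using hε

theorem ballFilter_lift'_comp_le {d : X → X → ℝ} (htri : ∀ x y z, d x z ≤ d x y + d y z) :
    (ballFilter d).lift' (fun V => V ○ V) ≤ ballFilter d :=
  le_iInf₂ fun ε hε => calc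
    _ ≤ (𝓟 {p : X × X | d p.1 p.2 < ε / 2}).lift' (fun V => V ○ V) :=
      lift'_mono (iInf₂_le _ (half_pos hε)) le_rfl
    _ = _ := lift'_principal (monotone_id.relComp monotone_id)
    _ ≤ _ := principal_mono.2 fun ⟨x, z⟩ ⟨y, hxy, hyz⟩ => by
      simp only [Set.mem_ofPred_eq] at hxy hyz ⊢
      linarith [htri x y z]

theorem nhds_le_comap_ballFilter [TopologicalSpace X] {d : X → X → ℝ} (hd : ∀ x, d x x = 0)
    (husc : ∀ x, UpperSemicontinuous (d x)) (x : X) :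
    𝓝 x ≤ comap (Prod.mk x) (ballFilter d) := by
  simp only [ballFilter, comap_iInf, comap_principal]
  exact le_iInf₂ fun ε hε => le_principal_iff.2 (husc x x ε (by simpa only [hd] using hε))

def pervinFilter (X : Type*) [TopologicalSpace X] : Filter (X × X) :=
  ⨅ (G : Set X) (_ : IsOpen G), 𝓟 {p | p.1 ∈ G → p.2 ∈ G}

section Pervin

variable [TopologicalSpace X]

theorem principal_id_le_pervinFilter : 𝓟 SetRel.id ≤ pervinFilter X :=
  le_iInf₂ fun _ _ => principal_mono.2 fun _ (hp : _ = _) h => hp ▸ h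

theorem pervinFilter_lift'_comp_le : (pervinFilter X).lift' (fun V => V ○ V) ≤ pervinFilter X :=
  le_iInf₂ fun G hG => calc
    _ ≤ (𝓟 {p : X × X | p.1 ∈ G → p.2 ∈ G}).lift' (fun V => V ○ V) :=
      lift'_mono (iInf₂_le G hG) le_rfl
    _ = _ := lift'_principal (monotone_id.relComp monotone_id)
    _ ≤ _ := principal_mono.2 <| by
      rintro ⟨a, c⟩ ⟨b, hab, hbc⟩ ha
      exact hbc (hab ha)

theorem comap_prodMk_pervinFilter (x : X) : comap (Prod.mk x) (pervinFilter X) = 𝓝 x := by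
  simp only [pervinFilter, comap_iInf, comap_principal]
  refine le_antisymm ((nhds_basis_opens x).ge_iff.2 fun G ⟨hxG, hG⟩ => ?_)
    (le_iInf₂ fun G hG => le_principal_iff.2 ?_)
  · exact mem_iInf_of_mem G (mem_iInf_of_mem hG (mem_principal.2 fun _ hy => hy hxG))
  · by_cases hx : x ∈ G
    · exact mem_of_superset (hG.mem_nhds hx) fun _ hy _ => hy
    · exact univ_mem' fun _ h => absurd h hx

end Pervin

theorem qpmCond_of_forall_fineMember_iff [TopologicalSpace X]
    (H : ∀ W : Set (X × X), FineMember W ↔ ∀ x : X, {y | (x, y) ∈ W} ∈ 𝓝 x) : QPMCond X := by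
  intro N hN
  obtain ⟨q, hq, hWq⟩ := (H {p | p.2 ∈ N p.1}).2 hN
  obtain ⟨U, hU0, hUq, hU⟩ := q.exists_seq_comp_comp_subset hWq
  obtain ⟨d, hd, hρd⟩ := exists_isQuasiPseudometric_between (levelDist_nonneg U)
    (levelDist_self fun n => q.refl _ (hUq n)) (levelDist_le_two_mul_max hU)
  refine ⟨d, hd.nonneg, hd.self_eq_zero, hd.triangle,
    upperSemicontinuous_of_triangle hd.triangle fun y ε hε => ?_, fun x y hy => ?_⟩
  · filter_upwards [hq.eventually_levelDist_lt hUq y (half_pos hε)] with z hz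
    linarith [(hρd y z).2]
  · by_contra hy'
    have hsep : (x, y) ∉ U 0 := hU0 ▸ hy'
    linarith [pow_le_levelDist hsep, (hρd x y).1, show d x y < 1 from hy, pow_zero (2⁻¹ : ℝ)]

theorem fineMember_of_qpmCond [TopologicalSpace X] (h : QPMCond X) (W : Set (X × X))
    (hW : ∀ x : X, {y | (x, y) ∈ W} ∈ 𝓝 x) : FineMember W := by
  obtain ⟨d, -, hd_self, hd_tri, hd_usc, hd_ball⟩ := h (fun x => {y | (x, y) ∈ W}) hW
  refine ⟨.ofFilter (ballFilter d ⊓ pervinFilter X)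
      (le_inf (principal_id_le_ballFilter hd_self) principal_id_le_pervinFilter)
      (lift'_comp_le_inf (ballFilter_lift'_comp_le hd_tri) pervinFilter_lift'_comp_le),
    QuasiUniformity.compatible_ofFilter fun x => ?_, ?_⟩
  · rw [comap_inf, comap_prodMk_pervinFilter, inf_eq_right]
    exact nhds_le_comap_ballFilter hd_self hd_usc x
  · exact mem_inf_of_left (mem_iInf_of_mem (1 : ℝ) (mem_iInf_of_mem one_pos
      (mem_principal.2 fun (p : X × X) hp => hd_ball p.1 hp)))

end

/-- (4) ⟺ (6) of Elfard–Nickolas: if the finest compatible quasi-uniformity on `X` consists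
exactly of the neighborhoods of the diagonal in `X_d × X`, then the quasi-pseudometric
condition holds; conversely, the quasi-pseudometric condition implies that every neighborhood
of the diagonal in `X_d × X` belongs to the finest quasi-uniformity. -/
theorem fine_eq_diag_nbhds_iff_qpm {X : Type*} [TopologicalSpace X] :
    ((∀ W : Set (X × X), FineMember W ↔ ∀ x : X, {y | (x, y) ∈ W} ∈ nhds x) → QPMCond X) ∧
    (QPMCond X →
      ∀ W : Set (X × X), (∀ x : X, {y | (x, y) ∈ W} ∈ nhds x) → FineMember W) :=
  ⟨qpmCond_of_forall_fineMember_iff, fineMember_of_qpmCond⟩
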